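/- arXiv:2309.05200 — 2 statements merged into one kernel-verified Lean document; each statement's English description precedes it below -/
import Mathlib

section
/- Let α be a nonempty finite type, let f : α → ℝ be a probability mass function with f(y) > 0 for all y, and let k ∈ [0,1]. Define Z = Σ_y f(y)^k (so Z > 0) and g_k(y) = f(y)^k / Z, which is a probability mass function. Then g_k maximizes Shannon entropy subject to the KL constraint determined by itself: for every probability mass function g : α → ℝ with D_KL(g‖f) ≤ D_KL(g_k‖f), one has H(g) ≤ H(g_k). -/
open Real Finset

lemma gibbs_term_le {f g : ℝ} (hf : 0 < f) (hg : 0 ≤ g) :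
    g - f ≤ g * Real.log (g / f) := by
  rcases hg.eq_or_lt with h | h
  · simp [← h]; linarith
  · have h1 : Real.log (f / g) ≤ f / g - 1 := Real.log_le_sub_one_of_pos (by positivity)
    have h2 : Real.log (f / g) = - Real.log (g / f) := by
      rw [← Real.log_inv]; congr 1; field_simp
    have h3 : 1 - f / g ≤ Real.log (g / f) := by rw [h2] at h1; linarith
    have := mul_le_mul_of_nonneg_left h3 h.le
    have h4 : g * (1 - f / g) = g - f := by field_simp
    linarith [h4 ▸ this]

lemma gibbs_term_eq {f g : ℝ} (hf : 0 < f) (hg : 0 ≤ g)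
    (h : g * Real.log (g / f) ≤ g - f) : g = f := by
  rcases hg.eq_or_lt with h0 | h0
  · exfalso; rw [← h0] at h; simp at h; linarith
  · by_contra hne
    have hfg : f / g ≠ 1 := by
      intro he
      exact hne ((div_eq_one_iff_eq h0.ne').mp he).symm
    have hx : Real.log (f / g) ≠ 0 := by
      intro he
      rcases Real.log_eq_zero.mp he with h' | h' | h'
      · exact absurd h' (by positivity)
      · exact hfg h'
      · linarith [div_pos hf h0, h'.symm ▸ div_pos hf h0]
    have := Real.add_one_lt_exp hx
    rw [Real.exp_log (by positivity)] at this
    have h2 : Real.log (f / g) = - Real.log (g / f) := by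
      rw [← Real.log_inv]; congr 1; field_simp
    have h3 : - Real.log (g / f) < f / g - 1 := by rw [← h2]; linarith
    have h4 := mul_lt_mul_of_pos_left h3 h0
    have h5 : g * (f / g - 1) = f - g := by field_simp
    nlinarith

/-- **Maximum-entropy characterization behind BKI** (Section III-A, step 3):
for a strictly positive pmf f on a nonempty finite type and k ∈ [0,1], the
tilted pmf g_k(y) = f(y)^k / Z (with Z = Σ f(y)^k > 0) maximizes Shannon entropy
among all pmfs g with D_KL(g‖f) ≤ D_KL(g_k‖f). -/
theorem maxent_kl_tilted_pmf
    (α : Type*) [Fintype α] [Nonempty α]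
    (f : α → ℝ) (hf_pos : ∀ y, 0 < f y) (hf_sum : ∑ y, f y = 1)
    (k : ℝ) (hk0 : 0 ≤ k) (hk1 : k ≤ 1)
    (Z : ℝ) (hZ : Z = ∑ y, f y ^ k)
    (gk : α → ℝ) (hgk : ∀ y, gk y = f y ^ k / Z) :
    0 < Z ∧ (∀ y, 0 ≤ gk y) ∧ (∑ y, gk y) = 1 ∧
    (∀ g : α → ℝ, (∀ y, 0 ≤ g y) → (∑ y, g y) = 1 →
      (∑ y, g y * Real.log (g y / f y)) ≤ (∑ y, gk y * Real.log (gk y / f y)) →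
      (-∑ y, g y * Real.log (g y)) ≤ (-∑ y, gk y * Real.log (gk y))) := by
  have hZpos : 0 < Z := by
    rw [hZ]
    exact Finset.sum_pos (fun y _ => Real.rpow_pos_of_pos (hf_pos y) k) univ_nonempty
  have hgk_pos : ∀ y, 0 < gk y := fun y => by
    rw [hgk]; exact div_pos (Real.rpow_pos_of_pos (hf_pos y) k) hZpos
  have hgk_sum : (∑ y, gk y) = 1 := by
    simp only [hgk]
    rw [← Finset.sum_div, ← hZ, div_self hZpos.ne']
  refine ⟨hZpos, fun y => (hgk_pos y).le, hgk_sum, ?_⟩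
  intro g hg_nonneg hg_sum hD
  rcases lt_or_eq_of_le hk1 with hklt | hkeq
  · -- case k < 1
    have hlog_gk : ∀ y, Real.log (gk y) = k * Real.log (f y) - Real.log Z := fun y => by
      rw [hgk, Real.log_div (Real.rpow_pos_of_pos (hf_pos y) k).ne' hZpos.ne',
        Real.log_rpow (hf_pos y)]
    set A := ∑ y, g y * Real.log (g y) with hA
    set Sg := ∑ y, g y * Real.log (f y) with hSg
    set S := ∑ y, gk y * Real.log (f y) with hS
    set L := Real.log Z with hL
    set Dg := ∑ y, g y * Real.log (g y / f y) with hDg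
    set Dgk := ∑ y, gk y * Real.log (gk y / f y) with hDgk
    set Dggk := ∑ y, g y * Real.log (g y / gk y) with hDggk
    -- E3 : Σ gk log gk = k S - L
    have E3 : (∑ y, gk y * Real.log (gk y)) = k * S - L := by
      have : (∑ y, gk y * Real.log (gk y))
          = ∑ y, (k * (gk y * Real.log (f y)) - L * gk y) :=
        Finset.sum_congr rfl fun y _ => by rw [hlog_gk]; ring
      rw [this, Finset.sum_sub_distrib, ← Finset.mul_sum, ← Finset.mul_sum, hgk_sum, hS]; ring
    -- E1 : Dggk = A - k Sg + L
    have E1 : Dggk = A - k * Sg + L := by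
      have : Dggk = ∑ y, (g y * Real.log (g y) - k * (g y * Real.log (f y)) + L * g y) := by
        refine Finset.sum_congr rfl fun y _ => ?_
        rcases (hg_nonneg y).eq_or_lt with h0 | h0
        · rw [← h0]; ring
        · rw [Real.log_div h0.ne' (hgk_pos y).ne', hlog_gk]; ring
      rw [this]
      rw [Finset.sum_add_distrib, Finset.sum_sub_distrib, ← Finset.mul_sum, ← Finset.mul_sum,
        hg_sum, hA, hSg]
      ring
    -- E2 : Dg = A - Sg
    have E2 : Dg = A - Sg := by
      have : Dg = ∑ y, (g y * Real.log (g y) - g y * Real.log (f y)) := by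
        refine Finset.sum_congr rfl fun y _ => ?_
        rcases (hg_nonneg y).eq_or_lt with h0 | h0
        · rw [← h0]; ring
        · rw [Real.log_div h0.ne' (hf_pos y).ne']; ring
      rw [this, Finset.sum_sub_distrib, hA, hSg]
    -- E4 : Dgk = (k-1) S - L
    have E4 : Dgk = (k - 1) * S - L := by
      have : Dgk = ∑ y, (gk y * Real.log (gk y) - gk y * Real.log (f y)) := by
        refine Finset.sum_congr rfl fun y _ => ?_
        rw [Real.log_div (hgk_pos y).ne' (hf_pos y).ne']; ring
      rw [this, Finset.sum_sub_distrib, E3, hS]; ring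
    -- E5 : 0 ≤ Dggk
    have E5 : (0:ℝ) ≤ Dggk := by
      have h1 : (∑ y, (g y - gk y)) ≤ Dggk :=
        Finset.sum_le_sum fun y _ => gibbs_term_le (hgk_pos y) (hg_nonneg y)
      rw [Finset.sum_sub_distrib, hg_sum, hgk_sum] at h1
      linarith
    -- derive S ≤ Sg
    have hS' : (1 - k) * S = -Dgk - L := by linear_combination E4
    have hSg' : (1 - k) * Sg = Dggk - Dg - L := by linear_combination (-1 : ℝ) * E1 + E2
    have hdiff : (1 - k) * (S - Sg) ≤ 0 := by nlinarith
    have hSle : S - Sg ≤ 0 := by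
      by_contra h
      push_neg at h
      linarith [mul_pos (sub_pos.mpr hklt) h]
    have hkmul : k * (S - Sg) ≤ 0 := mul_nonpos_of_nonneg_of_nonpos hk0 hSle
    rw [E3]
    nlinarith
  · -- case k = 1
    subst hkeq
    have hZ1 : Z = 1 := by simpa [Real.rpow_one, hf_sum] using hZ
    have hgkf : ∀ y, gk y = f y := fun y => by rw [hgk, hZ1, Real.rpow_one, div_one]
    have hDgk0 : (∑ y, gk y * Real.log (gk y / f y)) = 0 :=
      Finset.sum_eq_zero fun y _ => by
        rw [hgkf, div_self (hf_pos y).ne', Real.log_one, mul_zero]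
    rw [hDgk0] at hD
    have hterm_nonneg : ∀ y ∈ univ, (0:ℝ) ≤ g y * Real.log (g y / f y) - (g y - f y) :=
      fun y _ => by linarith [gibbs_term_le (hf_pos y) (hg_nonneg y)]
    have hsum0 : (∑ y, (g y * Real.log (g y / f y) - (g y - f y))) = 0 := by
      have hle : (∑ y, (g y * Real.log (g y / f y) - (g y - f y))) ≤ 0 := by
        rw [Finset.sum_sub_distrib, Finset.sum_sub_distrib, hg_sum, hf_sum]
        linarith
      have hge : (0:ℝ) ≤ ∑ y, (g y * Real.log (g y / f y) - (g y - f y)) :=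
        Finset.sum_nonneg hterm_nonneg
      linarith
    have hgf : ∀ y, g y = f y := by
      intro y
      have := (Finset.sum_eq_zero_iff_of_nonneg hterm_nonneg).mp hsum0 y (mem_univ y)
      exact gibbs_term_eq (hf_pos y) (hg_nonneg y) (by linarith)
    have : (∑ y, g y * Real.log (g y)) = ∑ y, gk y * Real.log (gk y) :=
      Finset.sum_congr rfl fun y _ => by rw [hgf, hgkf]
    linarith [this.le]
end

section
/- Let D be a nonempty finite set, let f, μ : D → ℝ, let σ : D → ℝ with σ(x) ≥ 0 for all x, and let β ≥ 0. Suppose |f(x) − μ(x)| ≤ √β · σ(x) for all x ∈ D, and let x_s ∈ D be a maximizer over D of the upper confidence bound x ↦ μ(x) + √β·σ(x). Then for every x* ∈ D, f(x*) − f(x_s) ≤ 2·√β·σ(x_s); in particular the instantaneous regret of the UCB-selected действия x_s against the true maximizer of f is at most 2√β σ(x_s). -/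
open Finset

/-- **Single-step regret of the UCB rule** (Eq. (10), Lemma 1, Remark 2): if valid
confidence intervals |f(x) − μ(x)| ≤ √β σ(x) hold on a nonempty finite candidate set D
and x_s maximizes the UCB μ(x) + √β σ(x) over D, then for every x* ∈ D the
instantaneous regret satisfies f(x*) − f(x_s) ≤ 2√β σ(x_s). -/
theorem ucb_instantaneous_regret
    {α : Type*} (D : Finset α) (hD : D.Nonempty)
    (f μ σ : α → ℝ) (hσ : ∀ x ∈ D, 0 ≤ σ x)
    (β : ℝ) (hβ : 0 ≤ β)
    (hconf : ∀ x ∈ D, |f x - μ x| ≤ Real.sqrt β * σ x)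
    (xs : α) (hxs : xs ∈ D)
    (hmax : ∀ x ∈ D, μ x + Real.sqrt β * σ x ≤ μ xs + Real.sqrt β * σ xs) :
    ∀ xstar ∈ D, f xstar - f xs ≤ 2 * Real.sqrt β * σ xs := by
  intro xstar hxstar
  have h1 := abs_le.mp (hconf xstar hxstar)
  have h2 := abs_le.mp (hconf xs hxs)
  have h3 := hmax xstar hxstar
  linarith [h1.1, h1.2, h2.1, h2.2]
end
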